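/- arXiv:1207.3241 — 8 statements merged into one kernel-verified Lean document; each statement's English description precedes it below -/
import Mathlib

section
/- Let μ be a measure on ℝ with μ((c, c+δ]) < ∞ for some δ > 0, let c ∈ ℝ, L ≥ 0, and let Δ : (0, ∞) → [0, ∞) satisfy Δ(h) → 0 and Δ(h)/h → L as h → 0⁺. Then (1/h)·∫₀^{Δ(h)} μ((c, c + y]) dy → 0 as h → 0⁺. -/
open MeasureTheory Filter Set Topology

/-! Since `y ↦ μ (c, c + y]` is monotone, `∫₀^{Δ h} μ (c, c + y] dy ≤ Δ h · μ (c, c + Δ h]`, so the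
quantity is squeezed between `0` and `(Δ h / h) · μ (c, c + Δ h]`. The first factor tends to `L`
and the second to `μ (⋂_{y > 0} (c, c + y]) = μ ∅ = 0` by continuity from above, which is where
finiteness of `μ (c, c + δ]` enters. -/

lemma intervalIntegral_le_sub_mul_of_monotoneOn {g : ℝ → ℝ} {a b : ℝ} (hab : a ≤ b)
    (hg : MonotoneOn g (Icc a b)) : ∫ y in a..b, g y ≤ (b - a) * g b := by
  simpa using intervalIntegral.integral_mono_on hab
    (hg.mono (uIcc_of_le hab).subset).intervalIntegrable (intervalIntegrable_const (μ := volume))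
    fun y hy => hg hy (right_mem_Icc.2 hab) hy.2

theorem tendsto_inv_mul_intervalIntegral_of_monotoneOn {g Δ : ℝ → ℝ} {δ L : ℝ} (hδ : 0 < δ)
    (hmono : MonotoneOn g (Icc 0 δ)) (hnonneg : ∀ y ∈ Icc 0 δ, 0 ≤ g y)
    (hg : Tendsto g (𝓝[≥] 0) (𝓝 0)) (hΔ : ∀ h > 0, 0 ≤ Δ h) (hΔ0 : Tendsto Δ (𝓝[>] 0) (𝓝 0))
    (hΔL : Tendsto (fun h => Δ h / h) (𝓝[>] 0) (𝓝 L)) :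
    Tendsto (fun h => (1 / h) * ∫ y in (0 : ℝ)..(Δ h), g y) (𝓝[>] 0) (𝓝 0) := by
  have hsqueeze : ∀ᶠ h in 𝓝[>] 0, 0 ≤ (1 / h) * ∫ y in (0 : ℝ)..(Δ h), g y ∧
      (1 / h) * ∫ y in (0 : ℝ)..(Δ h), g y ≤ Δ h / h * g (Δ h) := by
    filter_upwards [self_mem_nhdsWithin, hΔ0.eventually (eventually_lt_nhds hδ)]
      with h (hh : 0 < h) hΔδ
    have hsub : Icc 0 (Δ h) ⊆ Icc 0 δ := Icc_subset_Icc_right hΔδ.le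
    refine ⟨mul_nonneg (by positivity) <|
      intervalIntegral.integral_nonneg (hΔ h hh) fun y hy => hnonneg y (hsub hy), ?_⟩
    calc (1 / h) * ∫ y in (0 : ℝ)..(Δ h), g y ≤ (1 / h) * (Δ h * g (Δ h)) := by
          gcongr
          simpa using intervalIntegral_le_sub_mul_of_monotoneOn (hΔ h hh) (hmono.mono hsub)
      _ = Δ h / h * g (Δ h) := by ring
  have hΔ' : Tendsto Δ (𝓝[>] 0) (𝓝[≥] 0) :=
    tendsto_nhdsWithin_iff.mpr ⟨hΔ0, eventually_nhdsWithin_of_forall hΔ⟩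
  have hupper : Tendsto (fun h => Δ h / h * g (Δ h)) (𝓝[>] 0) (𝓝 0) := by
    simpa using hΔL.mul (hg.comp hΔ')
  exact tendsto_of_tendsto_of_tendsto_of_le_of_le' tendsto_const_nhds hupper
    (hsqueeze.mono fun _ h => h.1) (hsqueeze.mono fun _ h => h.2)

lemma biInter_Ioc_add_pos_eq_empty (c : ℝ) : ⋂ r > (0 : ℝ), Ioc c (c + r) = ∅ := by
  refine eq_empty_iff_forall_notMem.mpr fun x hx => ?_
  simp only [mem_iInter, mem_Ioc] at hx
  have hcx := (hx 1 one_pos).1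
  linarith [(hx ((x - c) / 2) (by linarith)).2]

lemma tendsto_measure_Ioc_nhdsGE (μ : Measure ℝ) (c : ℝ)
    (hfin : ∃ δ > 0, μ (Ioc c (c + δ)) ≠ ⊤) :
    Tendsto (fun y => μ (Ioc c (c + y))) (𝓝[≥] 0) (𝓝 0) := by
  have hGT : ContinuousWithinAt (fun y => μ (Ioc c (c + y))) (Ioi 0) 0 := by
    have := tendsto_measure_biInter_gt (μ := μ) (s := fun y => Ioc c (c + y)) (a := 0)
      (fun _ _ => nullMeasurableSet_Ioc) (fun _ _ _ hij => Ioc_subset_Ioc_right (by linarith)) hfin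
    rw [biInter_Ioc_add_pos_eq_empty, measure_empty] at this
    rwa [ContinuousWithinAt, add_zero, Ioc_self, measure_empty]
  simpa [ContinuousWithinAt] using continuousWithinAt_Ioi_iff_Ici.mp hGT

lemma monotoneOn_toReal_measure_Ioc (μ : Measure ℝ) (c : ℝ) {δ : ℝ}
    (hfin : μ (Ioc c (c + δ)) ≠ ⊤) :
    MonotoneOn (fun y => (μ (Ioc c (c + y))).toReal) (Iic δ) := fun y _ z (hz : z ≤ δ) hyz =>
  ENNReal.toReal_mono
    (ne_top_of_le_ne_top hfin (measure_mono (Ioc_subset_Ioc_right (by linarith))))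
    (measure_mono (Ioc_subset_Ioc_right (by linarith)))

theorem stmt_3_general (μ : Measure ℝ) (c : ℝ) (hμ : ∃ δ > 0, μ (Ioc c (c + δ)) < ⊤)
    (L : ℝ) (Δ : ℝ → ℝ) (hΔ : ∀ h > 0, 0 ≤ Δ h)
    (hΔ0 : Tendsto Δ (nhdsWithin 0 (Ioi 0)) (nhds 0))
    (hΔL : Tendsto (fun h => Δ h / h) (nhdsWithin 0 (Ioi 0)) (nhds L)) :
    Tendsto (fun h => (1 / h) * ∫ y in (0 : ℝ)..(Δ h), (μ (Ioc c (c + y))).toReal)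
      (nhdsWithin 0 (Ioi 0)) (nhds 0) := by
  obtain ⟨δ, hδ, hfin⟩ := hμ
  have hg : Tendsto (fun y => (μ (Ioc c (c + y))).toReal) (𝓝[≥] 0) (𝓝 0) :=
    (ENNReal.tendsto_toReal ENNReal.zero_ne_top).comp
      (tendsto_measure_Ioc_nhdsGE μ c ⟨δ, hδ, hfin.ne⟩)
  exact tendsto_inv_mul_intervalIntegral_of_monotoneOn hδ
    ((monotoneOn_toReal_measure_Ioc μ c hfin.ne).mono Icc_subset_Iic_self)
    (fun _ _ => ENNReal.toReal_nonneg) hg hΔ hΔ0 hΔL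

/-- upward band estimate in the level-crossing analysis: if
`μ((c, c+δ]) < ∞` for some `δ > 0`, `Δ(h) → 0` and `Δ(h)/h → L ≥ 0` as
`h → 0⁺`, then `(1/h) ∫₀^{Δ(h)} μ((c, c+y]) dy → 0` as `h → 0⁺`. -/
theorem stmt_3 (μ : Measure ℝ) (c : ℝ) (hμ : ∃ δ > 0, μ (Ioc c (c + δ)) < ⊤)
    (L : ℝ) (hL : 0 ≤ L) (Δ : ℝ → ℝ) (hΔ : ∀ h > 0, 0 ≤ Δ h)
    (hΔ0 : Tendsto Δ (nhdsWithin 0 (Ioi 0)) (nhds 0))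
    (hΔL : Tendsto (fun h => Δ h / h) (nhdsWithin 0 (Ioi 0)) (nhds L)) :
    Tendsto (fun h => (1 / h) * ∫ y in (0 : ℝ)..(Δ h), (μ (Ioc c (c + y))).toReal)
      (nhdsWithin 0 (Ioi 0)) (nhds 0) :=
  stmt_3_general μ c hμ L Δ hΔ hΔ0 hΔL
end

section
/- Let μ be a measure on ℝ with μ((c − δ, c]) < ∞ for some δ > 0, let c ∈ ℝ, L ≥ 0, and let Δ : (0, ∞) → [0, ∞) satisfy Δ(h) → 0 and Δ(h)/h → L as h → 0⁺. Then (1/h)·∫₀^{Δ(h)} μ((c − y, c]) dy → L·μ({c}) as h → 0⁺. -/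
/-!
The function `g y = μ((c − y, c])` is monotone, hence measurable, and by continuity of `μ` from
above `g y → μ({c})` as `y → 0⁺`. So `Φ t = ∫₀ᵗ g` has right derivative `μ({c})` at `0`, and
`Φ (Δ h) / h = (Φ (Δ h) / Δ h) · (Δ h / h) → μ({c}) · L`; the little-o form of the derivative
makes this work even where `Δ h = 0`.
-/

open MeasureTheory Filter Set Topology Asymptotics

theorem biInter_Ioc_sub_eq_singleton (c : ℝ) : ⋂ r > 0, Ioc (c - r) c = {c} := by
  ext x
  simp only [mem_iInter, mem_Ioc, mem_singleton_iff]
  refine ⟨fun hx => le_antisymm (hx 1 one_pos).2 (le_of_forall_pos_lt_add fun r hr => ?_), ?_⟩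
  · linarith [(hx r hr).1]
  · rintro rfl r hr
    exact ⟨by linarith, le_rfl⟩

theorem tendsto_measure_Ioc_sub_nhdsGT (μ : Measure ℝ) (c : ℝ)
    (hμ : ∃ δ > 0, μ (Ioc (c - δ) c) ≠ ⊤) :
    Tendsto (fun y => μ (Ioc (c - y) c)) (𝓝[>] 0) (𝓝 (μ {c})) := by
  rw [← biInter_Ioc_sub_eq_singleton c]
  exact tendsto_measure_biInter_gt (fun _ _ => measurableSet_Ioc.nullMeasurableSet)
    (fun _ _ _ _ => Ioc_subset_Ioc_left (by linarith)) hμ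

theorem HasDerivWithinAt.tendsto_comp_div {Φ : ℝ → ℝ} {m : ℝ} {s : Set ℝ}
    (hΦ : HasDerivWithinAt Φ m s 0) {α : Type*} {l : Filter α} {Δ ρ : α → ℝ} {L : ℝ}
    (hρ : ∀ᶠ a in l, ρ a ≠ 0) (hΔ : Tendsto Δ l (𝓝[s] 0))
    (hΔL : Tendsto (fun a => Δ a / ρ a) l (𝓝 L)) :
    Tendsto (fun a => (Φ (Δ a) - Φ 0) / ρ a) l (𝓝 (m * L)) := by
  have hlin : (fun a => Φ (Δ a) - Φ 0 - m * Δ a) =o[l] Δ := by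
    have := (hasDerivWithinAt_iff_isLittleO.mp hΦ).comp_tendsto hΔ
    simp only [Function.comp_def, sub_zero, smul_eq_mul, mul_comm] at this
    exact this
  have hΔρ : Δ =O[l] ρ :=
    isBigO_of_div_tendsto_nhds (hρ.mono fun a ha h0 => absurd h0 ha) L hΔL
  have herr := (hlin.trans_isBigO hΔρ).tendsto_div_nhds_zero
  have hsum := herr.add (hΔL.const_mul m)
  rw [zero_add] at hsum
  refine hsum.congr' ?_
  filter_upwards [hρ] with a ha
  field_simp
  ring

theorem stmt_4_general (μ : Measure ℝ) (c : ℝ) (hμ : ∃ δ > 0, μ (Ioc (c - δ) c) < ⊤)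
    (L : ℝ) (Δ : ℝ → ℝ) (hΔ : ∀ h > 0, 0 ≤ Δ h)
    (hΔ0 : Tendsto Δ (nhdsWithin 0 (Ioi 0)) (nhds 0))
    (hΔL : Tendsto (fun h => Δ h / h) (nhdsWithin 0 (Ioi 0)) (nhds L)) :
    Tendsto (fun h => (1 / h) * ∫ y in (0 : ℝ)..(Δ h), (μ (Ioc (c - y) c)).toReal)
      (nhdsWithin 0 (Ioi 0)) (nhds (L * (μ {c}).toReal)) := by
  obtain ⟨δ, hδ, hδfin⟩ := hμ
  have hc_fin : μ {c} ≠ ⊤ :=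
    ne_top_of_le_ne_top hδfin.ne (measure_mono (singleton_subset_iff.mpr ⟨by linarith, le_rfl⟩))
  have hmono : Monotone fun y => μ (Ioc (c - y) c) :=
    fun _ _ hyy' => measure_mono (Ioc_subset_Ioc_left (by linarith))
  have hlim : Tendsto (fun y => (μ (Ioc (c - y) c)).toReal) (𝓝[>] 0) (𝓝 (μ {c}).toReal) :=
    (ENNReal.tendsto_toReal hc_fin).comp (tendsto_measure_Ioc_sub_nhdsGT μ c ⟨δ, hδ, hδfin.ne⟩)
  have hderiv : HasDerivWithinAt (fun t => ∫ y in (0 : ℝ)..t, (μ (Ioc (c - y) c)).toReal)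
      (μ {c}).toReal (Ici 0) 0 :=
    intervalIntegral.integral_hasDerivWithinAt_of_tendsto_ae_right .refl
      hmono.measurable.ennreal_toReal.stronglyMeasurable.stronglyMeasurableAtFilter
      (hlim.mono_left inf_le_left)
  have hΔ' : Tendsto Δ (𝓝[>] 0) (𝓝[Ici 0] 0) :=
    tendsto_nhdsWithin_iff.mpr ⟨hΔ0, eventually_nhdsWithin_of_forall hΔ⟩
  have hcomp := hderiv.tendsto_comp_div
    (eventually_mem_nhdsWithin.mono fun _ hh => (mem_Ioi.mp hh).ne') hΔ' hΔL
  simp only [intervalIntegral.integral_same, sub_zero] at hcomp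
  rw [mul_comm L]
  refine hcomp.congr fun h => ?_
  rw [one_div_mul_eq_div]

/-- downward band estimate in the level-crossing analysis: if
`μ((c−δ, c]) < ∞` for some `δ > 0`, `Δ(h) → 0` and `Δ(h)/h → L ≥ 0` as
`h → 0⁺`, then `(1/h) ∫₀^{Δ(h)} μ((c−y, c]) dy → L·μ({c})` as `h → 0⁺`. -/
theorem stmt_4 (μ : Measure ℝ) (c : ℝ) (hμ : ∃ δ > 0, μ (Ioc (c - δ) c) < ⊤)
    (L : ℝ) (hL : 0 ≤ L) (Δ : ℝ → ℝ) (hΔ : ∀ h > 0, 0 ≤ Δ h)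
    (hΔ0 : Tendsto Δ (nhdsWithin 0 (Ioi 0)) (nhds 0))
    (hΔL : Tendsto (fun h => Δ h / h) (nhdsWithin 0 (Ioi 0)) (nhds L)) :
    Tendsto (fun h => (1 / h) * ∫ y in (0 : ℝ)..(Δ h), (μ (Ioc (c - y) c)).toReal)
      (nhdsWithin 0 (Ioi 0)) (nhds (L * (μ {c}).toReal)) :=
  stmt_4_general μ c hμ L Δ hΔ hΔ0 hΔL
end

section
/- Let f : ℝ → ℝ be nondecreasing and right-continuous with f(x) = 0 for all x ≤ 0, and let μ_f be its Lebesgue–Stieltjes measure. Let T > 0, let c be a real-valued function defined on a neighborhood of θ ∈ ℝ, differentiable at θ with derivative L = c'(θ), and assume c(θ) > 0 and c(θ) ≠ T. Set a = (c(θ) − T)⁺ and H(θ') = ∫₀^T f((c(θ') − t)⁺) dt. Then H has a right derivative and a left derivative at θ, given by H'_r(θ) = L·[ f(c(θ)) − f(a) − 1_{L<0}·( μ_f({c(θ)}) − μ_f({a}) ) ] and H'_l(θ) = L·[ f(c(θ)) − f(a) − 1_{L>0}·( μ_f({c(θ)}) − μ_f({a}) ) ]. -/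
open MeasureTheory Set Filter Topology Function Asymptotics

/-!
Since `f` vanishes on `(-∞, 0]`, `H(θ') = Φ(c θ')` with `Φ(y) = ∫_{y-T}^{y} f`. By the fundamental
theorem of calculus for the monotone `f`, `Φ` has right derivative `f y - f (y - T)` and left
derivative `f (y⁻) - f ((y - T)⁻)`, and each jump `f x - f (x⁻)` is the atom `μ {x}`. A one-sided
chain rule concludes: when `c' θ < 0`, moving `θ` to the right moves `c θ` to the left, so the
right derivative of `H` sees the left derivative of `Φ`; when `c' θ = 0` both one-sided
derivatives of `Φ` are only needed as a Lipschitz bound.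
-/

theorem nhdsWithin_inf_ae_le_nhdsWithin_sdiff_singleton {X : Type*} [TopologicalSpace X]
    [MeasurableSpace X] {μ : Measure X} [NullSingletonClass μ] (s : Set X) (x : X) :
    𝓝[s] x ⊓ ae μ ≤ 𝓝[s \ {x}] x := by
  rw [sdiff_eq, nhdsWithin_inter']
  exact inf_le_inf_left _ (le_principal_iff.2 (compl_mem_ae_iff.2 (measure_singleton x)))

namespace Monotone

variable {f : ℝ → ℝ}

theorem hasDerivWithinAt_integral_Iic (hf : Monotone f) (a x : ℝ) :
    HasDerivWithinAt (fun u => ∫ t in a..u, f t) (leftLim f x) (Iic x) x := by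
  refine intervalIntegral.integral_hasDerivWithinAt_of_tendsto_ae_right hf.intervalIntegrable
    hf.measurable.aestronglyMeasurable.stronglyMeasurableAtFilter ?_
  refine (hf.tendsto_leftLim x).mono_left ?_
  simpa using nhdsWithin_inf_ae_le_nhdsWithin_sdiff_singleton (μ := volume) (Iic x) x

theorem hasDerivWithinAt_integral_Ici (hf : Monotone f) (a : ℝ) {x : ℝ}
    (hx : ContinuousWithinAt f (Ici x) x) :
    HasDerivWithinAt (fun u => ∫ t in a..u, f t) (f x) (Ici x) x :=
  intervalIntegral.integral_hasDerivWithinAt_right hf.intervalIntegrable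
    hf.measurable.aestronglyMeasurable.stronglyMeasurableAtFilter (hx.mono Ioi_subset_Ici_self)

theorem integral_comp_sub_left_eq_sub (hf : Monotone f) (T y : ℝ) :
    ∫ t in (0 : ℝ)..T, f (y - t) = (∫ u in (0 : ℝ)..y, f u) - ∫ u in (0 : ℝ)..y - T, f u := by
  rw [intervalIntegral.integral_comp_sub_left f y, sub_zero,
    intervalIntegral.integral_interval_sub_left hf.intervalIntegrable hf.intervalIntegrable]

variable {T y : ℝ}

theorem hasDerivWithinAt_integral_comp_sub_Ici (hf : Monotone f)
    (hy : ContinuousWithinAt f (Ici y) y) (hyT : ContinuousWithinAt f (Ici (y - T)) (y - T)) :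
    HasDerivWithinAt (fun z => ∫ t in (0 : ℝ)..T, f (z - t)) (f y - f (y - T)) (Ici y) y := by
  simp_rw [hf.integral_comp_sub_left_eq_sub T]
  have hshift := (hf.hasDerivWithinAt_integral_Ici 0 hyT).comp y
    ((hasDerivWithinAt_id y (Ici y)).sub_const T) fun z hz => sub_le_sub_right (mem_Ici.1 hz) T
  simp only [Function.comp_def, id, mul_one] at hshift
  exact (hf.hasDerivWithinAt_integral_Ici 0 hy).sub hshift

theorem hasDerivWithinAt_integral_comp_sub_Iic (hf : Monotone f) :
    HasDerivWithinAt (fun z => ∫ t in (0 : ℝ)..T, f (z - t))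
      (leftLim f y - leftLim f (y - T)) (Iic y) y := by
  simp_rw [hf.integral_comp_sub_left_eq_sub T]
  have hshift := (hf.hasDerivWithinAt_integral_Iic 0 (y - T)).comp y
    ((hasDerivWithinAt_id y (Iic y)).sub_const T) fun z hz => sub_le_sub_right (mem_Iic.1 hz) T
  simp only [Function.comp_def, id, mul_one] at hshift
  exact (hf.hasDerivWithinAt_integral_Iic 0 y).sub hshift

end Monotone

theorem leftLim_eq_zero_of_forall_le {f : ℝ → ℝ} (hf : ∀ x ≤ 0, f x = 0) {x : ℝ} (hx : x ≤ 0) :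
    leftLim f x = 0 :=
  leftLim_eq_of_tendsto <| tendsto_const_nhds.congr' <|
    eventually_nhdsWithin_of_forall fun z hz => (hf z ((mem_Iio.1 hz).le.trans hx)).symm

theorem apply_max_zero_of_forall_le {g : ℝ → ℝ} (hg : ∀ x ≤ 0, g x = 0) (x : ℝ) :
    g (max x 0) = g x := by
  rcases le_total x 0 with hx | hx
  · rw [max_eq_right hx, hg x hx, hg 0 le_rfl]
  · rw [max_eq_left hx]

theorem StieltjesFunction.eq_measure_of_measure_Ioc (F : StieltjesFunction ℝ) {μ : Measure ℝ}
    (hμ : ∀ a b, a < b → μ (Ioc a b) = ENNReal.ofReal (F b - F a)) : μ = F.measure :=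
  Measure.ext_of_Ioc' μ F.measure (fun a b h => by rw [hμ a b h]; exact ENNReal.ofReal_ne_top)
    fun a b h => by rw [hμ a b h, F.measure_Ioc]

theorem StieltjesFunction.measure_singleton_toReal (F : StieltjesFunction ℝ) (x : ℝ) :
    (F.measure {x}).toReal = F x - leftLim F x := by
  rw [F.measure_singleton, ENNReal.toReal_ofReal (sub_nonneg.2 (F.mono.leftLim_le le_rfl))]

section OneSidedChainRule

variable {G c : ℝ → ℝ} {θ L : ℝ}

theorem HasDerivAt.eventually_nhdsGT_lt (hc : HasDerivAt c L θ) (hL : 0 < L) :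
    ∀ᶠ x in 𝓝[>] θ, c θ < c x := by
  have hslope : Tendsto (slope c θ) (𝓝[>] θ) (𝓝 L) :=
    (hasDerivWithinAt_iff_tendsto_slope' self_notMem_Ioi).1 hc.hasDerivWithinAt
  filter_upwards [hslope.eventually_const_lt hL, self_mem_nhdsWithin] with x hx hθx
  exact (slope_pos_iff_of_le (le_of_lt hθx)).1 hx

theorem HasDerivAt.tendsto_nhdsGE (hc : HasDerivAt c L θ) {s : Set ℝ} (hθ : c θ ∈ s)
    (hs : ∀ᶠ x in 𝓝[>] θ, c x ∈ s) : Tendsto c (𝓝[≥] θ) (𝓝[s] (c θ)) := by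
  refine tendsto_nhdsWithin_iff.2 ⟨hc.continuousAt.tendsto.mono_left nhdsWithin_le_nhds, ?_⟩
  rw [← nhdsGT_sup_nhdsWithin_singleton, eventually_sup]
  exact ⟨hs, eventually_nhdsWithin_of_forall fun x hx => (mem_singleton_iff.1 hx) ▸ hθ⟩

theorem HasDerivAt.comp_of_deriv_eq_zero {dp dm : ℝ}
    (hp : HasDerivWithinAt G dp (Ici (c θ)) (c θ))
    (hm : HasDerivWithinAt G dm (Iic (c θ)) (c θ)) (hc : HasDerivAt c 0 θ) :
    HasDerivAt (fun x => G (c x)) 0 θ := by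
  have hG : (fun y => G y - G (c θ)) =O[𝓝 (c θ)] fun y => y - c θ := by
    rw [← nhdsLE_sup_nhdsGE]
    exact hm.hasFDerivWithinAt.isBigO_sub.sup hp.hasFDerivWithinAt.isBigO_sub
  have hc' : (fun x => c x - c θ) =o[𝓝 θ] fun x => x - θ := by
    simpa using hasDerivAt_iff_isLittleO.1 hc
  rw [hasDerivAt_iff_isLittleO]
  simp only [smul_zero, sub_zero]
  exact (hG.comp_tendsto hc.continuousAt).trans_isLittleO hc'

theorem HasDerivAt.comp_hasDerivWithinAt_Ici {dp dm : ℝ}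
    (hp : HasDerivWithinAt G dp (Ici (c θ)) (c θ))
    (hm : HasDerivWithinAt G dm (Iic (c θ)) (c θ)) (hc : HasDerivAt c L θ) :
    HasDerivWithinAt (fun x => G (c x)) (L * if L < 0 then dm else dp) (Ici θ) θ := by
  rcases lt_trichotomy L 0 with hL | rfl | hL
  · have hmaps := hc.tendsto_nhdsGE (s := Iic (c θ)) self_mem_Iic
      ((hc.neg.eventually_nhdsGT_lt (neg_pos.2 hL)).mono fun x hx => (neg_lt_neg_iff.1 hx).le)
    rw [if_pos hL, mul_comm]
    exact HasDerivAtFilter.comp hm hc.hasDerivWithinAt (hmaps.prodMap (tendsto_pure_pure _ _))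
  · simpa using (hc.comp_of_deriv_eq_zero hp hm).hasDerivWithinAt
  · have hmaps := hc.tendsto_nhdsGE (s := Ici (c θ)) self_mem_Ici
      ((hc.eventually_nhdsGT_lt hL).mono fun x hx => hx.le)
    rw [if_neg hL.not_gt, mul_comm]
    exact HasDerivAtFilter.comp hp hc.hasDerivWithinAt (hmaps.prodMap (tendsto_pure_pure _ _))

theorem HasDerivAt.comp_hasDerivWithinAt_Iic {dp dm : ℝ}
    (hp : HasDerivWithinAt G dp (Ici (c θ)) (c θ))
    (hm : HasDerivWithinAt G dm (Iic (c θ)) (c θ)) (hc : HasDerivAt c L θ) :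
    HasDerivWithinAt (fun x => G (c x)) (L * if 0 < L then dm else dp) (Iic θ) θ := by
  rw [← neg_neg θ] at hp hm hc
  have hreflected : HasDerivAt (fun x => c (-x)) (-L) (-θ) := by
    simpa [Function.comp_def] using hc.comp (-θ) (hasDerivAt_neg (-θ))
  have h := (hreflected.comp_hasDerivWithinAt_Ici (c := fun x => c (-x)) hp hm).comp θ
    (hasDerivAt_neg θ).hasDerivWithinAt fun x hx => neg_le_neg (mem_Iic.1 hx)
  simp only [Function.comp_def, neg_neg, neg_lt_zero] at h
  exact h.congr_deriv (by ring)

end OneSidedChainRule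

theorem stmt_5_general (f : ℝ → ℝ) (hf_mono : Monotone f)
    (hf_rc : ∀ x, ContinuousWithinAt f (Ici x) x)
    (hf0 : ∀ x ≤ 0, f x = 0)
    (μ : Measure ℝ)
    (hμ : ∀ a b, a ≤ b → μ (Ioc a b) = ENNReal.ofReal (f b - f a))
    (T : ℝ) (θ L : ℝ) (c : ℝ → ℝ)
    (hc : HasDerivAt c L θ) :
    HasDerivWithinAt (fun θ' => ∫ t in (0 : ℝ)..T, f (max (c θ' - t) 0))
      (L * (f (c θ) - f (max (c θ - T) 0) -
        (if L < 0 then 1 else 0) *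
          ((μ {c θ}).toReal - (μ {max (c θ - T) 0}).toReal)))
      (Ici θ) θ ∧
    HasDerivWithinAt (fun θ' => ∫ t in (0 : ℝ)..T, f (max (c θ' - t) 0))
      (L * (f (c θ) - f (max (c θ - T) 0) -
        (if 0 < L then 1 else 0) *
          ((μ {c θ}).toReal - (μ {max (c θ - T) 0}).toReal)))
      (Iic θ) θ := by
  let F : StieltjesFunction ℝ := ⟨f, hf_mono, hf_rc⟩
  have hjump : ∀ x, (μ {x}).toReal = f x - leftLim f x := by
    rw [F.eq_measure_of_measure_Ioc fun a b h => hμ a b h.le]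
    exact F.measure_singleton_toReal
  have hleft0 : ∀ x ≤ 0, leftLim f x = 0 := fun x => leftLim_eq_zero_of_forall_le hf0
  have hright := hf_mono.hasDerivWithinAt_integral_comp_sub_Ici (hf_rc (c θ)) (hf_rc (c θ - T))
  have hleft := hf_mono.hasDerivWithinAt_integral_comp_sub_Iic (y := c θ) (T := T)
  rw [← apply_max_zero_of_forall_le hf0 (c θ - T)] at hright
  rw [← apply_max_zero_of_forall_le hleft0 (c θ - T)] at hleft
  have hH : (fun θ' => ∫ t in (0 : ℝ)..T, f (max (c θ' - t) 0)) =
      fun θ' => ∫ t in (0 : ℝ)..T, f (c θ' - t) := by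
    simp_rw [apply_max_zero_of_forall_le hf0]
  rw [hH]
  constructor
  · convert hc.comp_hasDerivWithinAt_Ici hright hleft using 1
    rw [hjump, hjump]
    split_ifs <;> ring
  · convert hc.comp_hasDerivWithinAt_Iic hright hleft using 1
    rw [hjump, hjump]
    split_ifs <;> ring

/-- deterministic per-cycle core of Theorem 1. With `f`
nondecreasing, right-continuous, vanishing on `(-∞,0]`, `μ` its
Lebesgue–Stieltjes measure (characterized by `μ((a,b]) = f(b) − f(a)`),
`c` differentiable at `θ` with derivative `L`, `c(θ) > 0`, `c(θ) ≠ T`,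
`a = (c(θ) − T)⁺` and `H(θ') = ∫₀^T f((c(θ') − t)⁺) dt`, the right and left
derivatives of `H` at `θ` are
`L·[f(c(θ)) − f(a) − 1_{L<0}(μ{c(θ)} − μ{a})]` and
`L·[f(c(θ)) − f(a) − 1_{L>0}(μ{c(θ)} − μ{a})]`. -/
theorem stmt_5 (f : ℝ → ℝ) (hf_mono : Monotone f)
    (hf_rc : ∀ x, ContinuousWithinAt f (Ici x) x)
    (hf0 : ∀ x ≤ 0, f x = 0)
    (μ : Measure ℝ)
    (hμ : ∀ a b, a ≤ b → μ (Ioc a b) = ENNReal.ofReal (f b - f a))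
    (T : ℝ) (hT : 0 < T) (θ L : ℝ) (c : ℝ → ℝ)
    (hc : HasDerivAt c L θ) (hcpos : 0 < c θ) (hcT : c θ ≠ T) :
    HasDerivWithinAt (fun θ' => ∫ t in (0 : ℝ)..T, f (max (c θ' - t) 0))
      (L * (f (c θ) - f (max (c θ - T) 0) -
        (if L < 0 then 1 else 0) *
          ((μ {c θ}).toReal - (μ {max (c θ - T) 0}).toReal)))
      (Ici θ) θ ∧
    HasDerivWithinAt (fun θ' => ∫ t in (0 : ℝ)..T, f (max (c θ' - t) 0))
      (L * (f (c θ) - f (max (c θ - T) 0) -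
        (if 0 < L then 1 else 0) *
          ((μ {c θ}).toReal - (μ {max (c θ - T) 0}).toReal)))
      (Iic θ) θ :=
  stmt_5_general f hf_mono hf_rc hf0 μ hμ T θ L c hc
end

section
/- Let f : ℝ → ℝ be nondecreasing, continuous, with f(x) = 0 for all x ≤ 0. Let T > 0, let c be a real-valued function defined on a neighborhood of θ ∈ ℝ, differentiable at θ, with c(θ) > 0 and c(θ) ≠ T. Then H(θ') = ∫₀^T f((c(θ') − t)⁺) dt is differentiable at θ with H'(θ) = c'(θ)·[ f(c(θ)) − f((c(θ) − T)⁺) ]. -/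
/-!
Writing `g s = f (max s 0)` and `G y = ∫₀^y g`, the substitution `s = y - t` gives
`∫₀^T g (y - t) dt = G y - G (y - T)`. Since `g` is continuous, `G' = g` by the fundamental
theorem of calculus, so the chain rule yields `H'(θ) = c'(θ) (g (c θ) - g (c θ - T))`, and
`g (c θ) = f (c θ)` because `c θ > 0`.
-/

theorem intervalIntegral_comp_sub_left_eq_sub {g : ℝ → ℝ} (hg : Continuous g)
    (a b y : ℝ) :
    ∫ t in a..b, g (y - t) =
      (∫ s in (0 : ℝ)..(y - a), g s) - ∫ s in (0 : ℝ)..(y - b), g s := by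
  rw [intervalIntegral.integral_comp_sub_left g y,
    intervalIntegral.integral_interval_sub_left (hg.intervalIntegrable _ _)
      (hg.intervalIntegrable _ _)]

theorem hasDerivAt_integral_comp_sub {g c : ℝ → ℝ} {L θ : ℝ} (hg : Continuous g)
    (hc : HasDerivAt c L θ) (a b : ℝ) :
    HasDerivAt (fun θ' => ∫ t in a..b, g (c θ' - t))
      (L * (g (c θ - a) - g (c θ - b))) θ := by
  have hG : ∀ y, HasDerivAt (fun x => ∫ s in (0 : ℝ)..x, g s) (g y) y := fun y =>
    intervalIntegral.integral_hasDerivAt_right (hg.intervalIntegrable _ _)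
      (hg.stronglyMeasurableAtFilter _ _) hg.continuousAt
  have hdiff := ((hG _).comp θ (hc.sub_const a)).sub ((hG _).comp θ (hc.sub_const b))
  rw [← sub_mul, mul_comm] at hdiff
  simp only [intervalIntegral_comp_sub_left_eq_sub hg a b]
  exact hdiff

theorem stmt_6_general (f : ℝ → ℝ) (hf_cont : Continuous f)
    (T : ℝ) (θ L : ℝ) (c : ℝ → ℝ)
    (hc : HasDerivAt c L θ) (hcpos : 0 < c θ) :
    HasDerivAt (fun θ' => ∫ t in (0 : ℝ)..T, f (max (c θ' - t) 0))
      (L * (f (c θ) - f (max (c θ - T) 0))) θ := by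
  have hg : Continuous fun s : ℝ => f (max s 0) :=
    hf_cont.comp (continuous_id.max continuous_const)
  simpa only [sub_zero, max_eq_left hcpos.le] using hasDerivAt_integral_comp_sub hg hc 0 T

/-- deterministic per-cycle core of Corollary 1. For `f`
nondecreasing, continuous and vanishing on `(-∞,0]`, `T > 0`, `c`
differentiable at `θ` with `c(θ) > 0` and `c(θ) ≠ T`, the cycle cost
`H(θ') = ∫₀^T f((c(θ') − t)⁺) dt` is differentiable at `θ` with
`H'(θ) = c'(θ)·[f(c(θ)) − f((c(θ) − T)⁺)]`. -/
theorem stmt_6 (f : ℝ → ℝ) (hf_mono : Monotone f) (hf_cont : Continuous f)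
    (hf0 : ∀ x ≤ 0, f x = 0)
    (T : ℝ) (hT : 0 < T) (θ L : ℝ) (c : ℝ → ℝ)
    (hc : HasDerivAt c L θ) (hcpos : 0 < c θ) (hcT : c θ ≠ T) :
    HasDerivAt (fun θ' => ∫ t in (0 : ℝ)..T, f (max (c θ' - t) 0))
      (L * (f (c θ) - f (max (c θ - T) 0))) θ :=
  stmt_6_general f hf_cont T θ L c hc hcpos
end

section
/- Let f : ℝ → ℝ be convex and nondecreasing with f(x) = 0 for all x ≤ 0, let f'₊ denote its right derivative (a nondecreasing right-continuous function) and μ_{f'} the Lebesgue–Stieltjes measure of f'₊. Let T > 0 and let c be differentiable on a neighborhood of θ ∈ ℝ, with c' admitting a right derivative c''_r(θ) at θ, and assume c(θ) > T. Set a = c(θ) − T, L = c'(θ), and H(θ') = ∫₀^T f((c(θ') − t)⁺) dt. Then the derivative H' has a right derivative at θ equal to c''_r(θ)·[ f(c(θ)) − f(a) ] + L²·[ f'₊(c(θ)) − f'₊(a) − 1_{L<0}·( μ_{f'}({c(θ)}) − μ_{f'}({a}) ) ]. -/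
/-!
Since `c θ' > T` near `θ`, the integrand never reaches the kink of `(·)⁺`, so
`H θ' = ∫_{c θ' - T}^{c θ'} f` and `H' = (f ∘ c - f ∘ (c - T)) * c'` near `θ`. Differentiating this
product from the right, `f ∘ c` picks up the right derivative `g` of `f` where `c` increases and
the left derivative of `f` where `c` decreases; if `c' θ = 0` the choice does not matter, because
`f` has both one-sided derivatives and so is Lipschitz at the point. For convex `f` the left
derivative is `leftLim g`, and the jump `g x - leftLim g x` is the atom `μ' {x}`.
-/
open MeasureTheory Set Filter Function Topology

namespace ConvexOn

variable {f g : ℝ → ℝ}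

theorem slope_le_of_hasDerivWithinAt_Ioi_right {x y f' : ℝ} (hf : ConvexOn ℝ univ f)
    (hf' : HasDerivWithinAt f f' (Ioi y) y) (hxy : x < y) : slope f x y ≤ f' := by
  apply ge_of_tendsto ((hasDerivWithinAt_iff_tendsto_slope' self_notMem_Ioi).mp hf')
  filter_upwards [self_mem_nhdsWithin] with t (ht : y < t)
  rw [slope_comm, slope_def_field, slope_def_field]
  exact hf.secant_mono trivial trivial trivial hxy.ne ht.ne' (hxy.trans ht).le

theorem monotone_of_hasDerivWithinAt_Ioi (hf : ConvexOn ℝ univ f)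
    (hg : ∀ x, HasDerivWithinAt f (g x) (Ioi x) x) : Monotone g := by
  intro x y hxy
  rcases hxy.eq_or_lt with rfl | hxy
  · rfl
  exact (hf.le_slope_of_hasDerivWithinAt_Ioi trivial trivial hxy (hg x)).trans
    (hf.slope_le_of_hasDerivWithinAt_Ioi_right (hg y) hxy)

theorem slope_le_leftLim (hf : ConvexOn ℝ univ f)
    (hg : ∀ x, HasDerivWithinAt f (g x) (Ioi x) x) {w x : ℝ} (hwx : w < x) :
    slope f w x ≤ leftLim g x := by
  have hcont : ContinuousAt (slope f w) x := by
    have := ((hf.continuousOn isOpen_univ).continuousAt univ_mem (x := x))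
    rw [show slope f w = fun y => (f y - f w) / (y - w) from funext (slope_def_field f w)]
    exact (this.sub continuousAt_const).div (continuousAt_id.sub continuousAt_const)
      (sub_ne_zero.mpr hwx.ne')
  refine le_of_tendsto (hcont.tendsto.mono_left (nhdsWithin_le_nhds (s := Iio x))) ?_
  filter_upwards [Ioo_mem_nhdsLT hwx] with y hy
  exact (hf.slope_le_of_hasDerivWithinAt_Ioi_right (hg y) hy.1).trans
    ((hf.monotone_of_hasDerivWithinAt_Ioi hg).le_leftLim hy.2)

theorem hasDerivWithinAt_leftLim (hf : ConvexOn ℝ univ f)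
    (hg : ∀ x, HasDerivWithinAt f (g x) (Ioi x) x) (x : ℝ) :
    HasDerivWithinAt f (leftLim g x) (Iic x) x := by
  rw [← hasDerivWithinAt_Iio_iff_Iic, hasDerivWithinAt_iff_tendsto_slope' self_notMem_Iio]
  refine tendsto_of_tendsto_of_tendsto_of_le_of_le'
    ((hf.monotone_of_hasDerivWithinAt_Ioi hg).tendsto_leftLim x) tendsto_const_nhds ?_ ?_
  all_goals
    filter_upwards [self_mem_nhdsWithin] with y (hy : y < x)
    rw [slope_comm]
  · exact hf.le_slope_of_hasDerivWithinAt_Ioi trivial trivial hy (hg y)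
  · exact hf.slope_le_leftLim hg hy

end ConvexOn

theorem measure_singleton_eq_ofReal_sub_leftLim {g : ℝ → ℝ} (hg : Monotone g) {μ : Measure ℝ}
    (hμ : ∀ a b, a ≤ b → μ (Ioc a b) = ENNReal.ofReal (g b - g a)) (x : ℝ) :
    μ {x} = ENNReal.ofReal (g x - leftLim g x) := by
  have hinter : ⋂ r > (0 : ℝ), Ioc (x - r) x = {x} := by
    ext y
    simp only [mem_iInter, mem_Ioc, mem_singleton_iff]
    refine ⟨fun h => ?_, fun h r hr => by subst h; exact ⟨by linarith, le_rfl⟩⟩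
    by_contra hne
    have hyx : y < x := lt_of_le_of_ne (h 1 one_pos).2 hne
    linarith [(h (x - y) (by linarith)).1]
  have hmeas : Tendsto (fun r => μ (Ioc (x - r) x)) (𝓝[>] 0) (𝓝 (μ {x})) := by
    rw [← hinter]
    refine tendsto_measure_biInter_gt (fun r _ => measurableSet_Ioc.nullMeasurableSet)
      (fun r s _ hrs => Ioc_subset_Ioc_left (by linarith)) ⟨1, one_pos, ?_⟩
    rw [hμ _ _ (by linarith)]
    exact ENNReal.ofReal_ne_top
  have hleft : Tendsto (fun r => x - r) (𝓝[>] 0) (𝓝[<] x) := by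
    refine tendsto_nhdsWithin_iff.mpr ⟨?_, ?_⟩
    · exact ((continuous_sub_left x).tendsto' 0 x (sub_zero x)).mono_left nhdsWithin_le_nhds
    · filter_upwards [self_mem_nhdsWithin] with r (hr : 0 < r)
      simpa using hr
  refine tendsto_nhds_unique hmeas ?_
  refine ((ENNReal.continuous_ofReal.tendsto _).comp
    (tendsto_const_nhds.sub ((hg.tendsto_leftLim x).comp hleft))).congr' ?_
  filter_upwards [self_mem_nhdsWithin] with r (hr : 0 < r)
  exact (hμ _ _ (by linarith)).symm

theorem tendsto_nhdsWithin_Iic_of_hasDerivWithinAt_Ici_of_neg {c : ℝ → ℝ} {L θ : ℝ}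
    (hc : HasDerivWithinAt c L (Ici θ) θ) (hL : L < 0) :
    Tendsto c (𝓝[Ici θ] θ) (𝓝[Iic (c θ)] (c θ)) := by
  refine tendsto_nhdsWithin_iff.mpr ⟨hc.continuousWithinAt, ?_⟩
  rw [← Ioi_insert (a := θ), nhdsWithin_insert, eventually_sup, eventually_pure]
  refine ⟨mem_Iic.mpr le_rfl, ?_⟩
  filter_upwards [(hasDerivWithinAt_iff_tendsto_slope' self_notMem_Ioi).mp hc.Ioi_of_Ici
    (Iio_mem_nhds hL), self_mem_nhdsWithin] with t (ht : slope c θ t < 0) (hθt : θ < t)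
  exact ((slope_neg_iff_of_le hθt.le).mp ht).le

theorem tendsto_nhdsWithin_Ici_of_hasDerivWithinAt_Ici_of_pos {c : ℝ → ℝ} {L θ : ℝ}
    (hc : HasDerivWithinAt c L (Ici θ) θ) (hL : 0 < L) :
    Tendsto c (𝓝[Ici θ] θ) (𝓝[Ici (c θ)] (c θ)) := by
  refine tendsto_nhdsWithin_iff.mpr ⟨hc.continuousWithinAt, ?_⟩
  rw [← Ioi_insert (a := θ), nhdsWithin_insert, eventually_sup, eventually_pure]
  refine ⟨mem_Ici.mpr le_rfl, ?_⟩
  filter_upwards [(hasDerivWithinAt_iff_tendsto_slope' self_notMem_Ioi).mp hc.Ioi_of_Ici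
    (Ioi_mem_nhds hL), self_mem_nhdsWithin] with t (ht : 0 < slope c θ t) (hθt : θ < t)
  exact ((slope_pos_iff_of_le hθt.le).mp ht).le

theorem HasDerivWithinAt.comp_Ici_of_Iic_of_Ici {f c : ℝ → ℝ} {θ L dL dR : ℝ}
    (hfL : HasDerivWithinAt f dL (Iic (c θ)) (c θ))
    (hfR : HasDerivWithinAt f dR (Ici (c θ)) (c θ)) (hc : HasDerivWithinAt c L (Ici θ) θ) :
    HasDerivWithinAt (f ∘ c) ((if L < 0 then dL else dR) * L) (Ici θ) θ := by
  rcases lt_trichotomy L 0 with hL | rfl | hL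
  · rw [if_pos hL]
    exact HasDerivAtFilter.comp hfL hc
      ((tendsto_nhdsWithin_Iic_of_hasDerivWithinAt_Ici_of_neg hc hL).prodMap
        (tendsto_pure_pure _ _))
  · have hf : (fun y => f y - f (c θ)) =O[𝓝 (c θ)] fun y => y - c θ := by
      have := hfL.hasFDerivWithinAt.isBigO_sub.sup hfR.hasFDerivWithinAt.isBigO_sub
      rwa [← nhdsWithin_union, Iic_union_Ici, nhdsWithin_univ] at this
    have hc0 : (fun t => c t - c θ) =o[𝓝[Ici θ] θ] fun t => t - θ := by
      simpa using hc.isLittleO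
    rw [mul_zero, hasDerivWithinAt_iff_isLittleO]
    simpa [Function.comp_def] using (hf.comp_tendsto hc.continuousWithinAt).trans_isLittleO hc0
  · rw [if_neg hL.not_gt]
    exact HasDerivAtFilter.comp hfR hc
      ((tendsto_nhdsWithin_Ici_of_hasDerivWithinAt_Ici_of_pos hc hL).prodMap
        (tendsto_pure_pure _ _))

theorem hasDerivAt_integral_max_sub_zero {f : ℝ → ℝ} (hf : Continuous f) {T x : ℝ}
    (hT : 0 ≤ T) (hx : T < x) :
    HasDerivAt (fun y => ∫ t in (0 : ℝ)..T, f (max (y - t) 0)) (f x - f (x - T)) x := by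
  have hF : HasDerivAt (fun y => (∫ u in (0 : ℝ)..y, f u) - ∫ u in (0 : ℝ)..(y - T), f u)
      (f x - f (x - T)) x :=
    (hf.integral_hasStrictDerivAt 0 x).hasDerivAt.sub
      ((hf.integral_hasStrictDerivAt 0 (x - T)).hasDerivAt.comp_sub_const x T)
  refine hF.congr_of_eventuallyEq ?_
  filter_upwards [lt_mem_nhds hx] with y hy
  have hpos : ∀ t ∈ uIcc 0 T, f (max (y - t) 0) = f (y - t) := by
    intro t ht
    rw [uIcc_of_le hT] at ht
    rw [max_eq_left (by linarith [ht.2])]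
  rw [intervalIntegral.integral_congr hpos, intervalIntegral.integral_comp_sub_left f y,
    sub_zero, intervalIntegral.integral_interval_sub_left (hf.intervalIntegrable _ _)
      (hf.intervalIntegrable _ _)]

theorem stmt_7_general (f : ℝ → ℝ) (hf_conv : ConvexOn ℝ Set.univ f)
    (g : ℝ → ℝ) (hg : ∀ x, HasDerivWithinAt f (g x) (Ioi x) x)
    (μ' : Measure ℝ)
    (hμ' : ∀ a b, a ≤ b → μ' (Ioc a b) = ENNReal.ofReal (g b - g a))
    (T : ℝ) (hT : 0 < T) (θ : ℝ) (c : ℝ → ℝ)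
    (hc : ∀ᶠ θ' in nhds θ, DifferentiableAt ℝ c θ')
    (c2 : ℝ) (hc2 : HasDerivWithinAt (deriv c) c2 (Ici θ) θ)
    (hcT : T < c θ) :
    HasDerivWithinAt
      (deriv (fun θ' => ∫ t in (0 : ℝ)..T, f (max (c θ' - t) 0)))
      (c2 * (f (c θ) - f (c θ - T)) +
        (deriv c θ) ^ 2 * (g (c θ) - g (c θ - T) -
          (if deriv c θ < 0 then 1 else 0) *
            ((μ' {c θ}).toReal - (μ' {c θ - T}).toReal)))
      (Ici θ) θ := by
  have hg_mono := hf_conv.monotone_of_hasDerivWithinAt_Ioi hg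
  have hf_cont : Continuous f := continuousOn_univ.mp (hf_conv.continuousOn isOpen_univ)
  have hfL := hf_conv.hasDerivWithinAt_leftLim hg
  have hfR x : HasDerivWithinAt f (g x) (Ici x) x := (hg x).Ici_of_Ioi
  have hH : deriv (fun θ' => ∫ t in (0 : ℝ)..T, f (max (c θ' - t) 0)) =ᶠ[𝓝 θ]
      fun θ' => (f (c θ') - f (c θ' - T)) * deriv c θ' := by
    filter_upwards [hc, hc.self_of_nhds.continuousAt.eventually (lt_mem_nhds hcT)]
      with θ' hcθ' hTθ'
    exact ((hasDerivAt_integral_max_sub_zero hf_cont hT.le hTθ').comp θ'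
      hcθ'.hasDerivAt).deriv
  have hc' : HasDerivWithinAt c (deriv c θ) (Ici θ) θ :=
    hc.self_of_nhds.hasDerivAt.hasDerivWithinAt
  have hfc := (hfL (c θ)).comp_Ici_of_Iic_of_Ici (hfR (c θ)) hc'
  have hfcT := (hfL (c θ - T)).comp_Ici_of_Iic_of_Ici (c := fun θ' => c θ' - T)
    (hfR (c θ - T)) (hc'.sub_const T)
  refine (((hfc.sub hfcT).mul hc2).congr_of_eventuallyEq
    (hH.filter_mono nhdsWithin_le_nhds) hH.self_of_nhds).congr_deriv ?_
  simp only [Pi.sub_apply, comp_apply]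
  rw [measure_singleton_eq_ofReal_sub_leftLim hg_mono hμ',
    measure_singleton_eq_ofReal_sub_leftLim hg_mono hμ',
    ENNReal.toReal_ofReal (sub_nonneg.mpr (hg_mono.leftLim_le le_rfl)),
    ENNReal.toReal_ofReal (sub_nonneg.mpr (hg_mono.leftLim_le le_rfl))]
  split_ifs <;> ring

/-- deterministic per-cycle core of Theorem 2 (second derivative).
`f` is convex, nondecreasing, vanishing on `(-∞,0]`; `g = f'₊` is its right
derivative (nondecreasing and right-continuous) with Lebesgue–Stieltjes measure
`μ'`; `c` is differentiable on a neighborhood of `θ`, `c'` has a right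
derivative `c2` at `θ`, and `c(θ) > T`. Then with `a = c(θ) − T`,
`L = c'(θ)` and `H(θ') = ∫₀^T f((c(θ') − t)⁺) dt`, the derivative `H'` has a
right derivative at `θ` equal to
`c2·[f(c(θ)) − f(a)] + L²·[g(c(θ)) − g(a) − 1_{L<0}(μ'{c(θ)} − μ'{a})]`. -/
theorem stmt_7 (f : ℝ → ℝ) (hf_conv : ConvexOn ℝ Set.univ f)
    (hf_mono : Monotone f) (hf0 : ∀ x ≤ 0, f x = 0)
    (g : ℝ → ℝ) (hg : ∀ x, HasDerivWithinAt f (g x) (Ioi x) x)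
    (hg_mono : Monotone g) (hg_rc : ∀ x, ContinuousWithinAt g (Ici x) x)
    (μ' : Measure ℝ)
    (hμ' : ∀ a b, a ≤ b → μ' (Ioc a b) = ENNReal.ofReal (g b - g a))
    (T : ℝ) (hT : 0 < T) (θ : ℝ) (c : ℝ → ℝ)
    (hc : ∀ᶠ θ' in nhds θ, DifferentiableAt ℝ c θ')
    (c2 : ℝ) (hc2 : HasDerivWithinAt (deriv c) c2 (Ici θ) θ)
    (hcT : T < c θ) :
    HasDerivWithinAt
      (deriv (fun θ' => ∫ t in (0 : ℝ)..T, f (max (c θ' - t) 0)))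
      (c2 * (f (c θ) - f (c θ - T)) +
        (deriv c θ) ^ 2 * (g (c θ) - g (c θ - T) -
          (if deriv c θ < 0 then 1 else 0) *
            ((μ' {c θ}).toReal - (μ' {c θ - T}).toReal)))
      (Ici θ) θ :=
  stmt_7_general f hf_conv g hg μ' hμ' T hT θ c hc c2 hc2 hcT
end

section
/- Let f : ℝ → ℝ be nondecreasing and right-continuous with f(x) = 0 for all x ≤ 0, and set F(w) = ∫₀^w f(u) du. Let c > 0, T > 0 and ν > 0 with c ≠ νT, and define H(ν') = ∫₀^T f((c − ν't)⁺) dt for ν' > 0. Set a = (c − νT)⁺ and let f(a−) denote the left limit of f at a. Then H has one-sided derivatives at ν given by H'_r(ν) = −(1/ν²)·[ F(c) − F(a) − (c − a)·f(a−) ] and H'_l(ν) = −(1/ν²)·[ F(c) − F(a) − (c − a)·f(a) ]. -/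
open Set Function Filter Topology MeasureTheory

/-!
For `ν' > 0` the substitution `u = c - ν' t` gives
`H(ν') = (F(c) - F(c - ν'T)) / ν'`, and since `f` vanishes on `(-∞, 0]` one may replace
`a = (c - νT)⁺` by `c - νT` throughout. Increasing `ν'` moves `c - ν'T` to the left, so the
right derivative of `H` sees the left derivative `f(a-)` of `F`, and the left derivative of `H`
the right derivative `f(a)` of `F` (right-continuity of `f`). The quotient rule then gives both
formulas.
-/

lemma nhdsWithin_Iic_inf_ae_le_nhdsWithin_Iio (x : ℝ) : 𝓝[≤] x ⊓ ae volume ≤ 𝓝[<] x := by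
  rw [← Iic_sdiff_right, sdiff_eq, nhdsWithin_inter']
  exact inf_le_inf_left _ (le_principal_iff.2 (compl_mem_ae_iff.2 (measure_singleton x)))

section PrimitiveOfMonotone

variable {f : ℝ → ℝ} (hf : Monotone f) (a : ℝ)
include hf

lemma Monotone.hasDerivWithinAt_integral_Ici_s8 {x : ℝ} (hx : ContinuousWithinAt f (Ici x) x) :
    HasDerivWithinAt (fun w => ∫ u in a..w, f u) (f x) (Ici x) x :=
  intervalIntegral.integral_hasDerivWithinAt_right hf.intervalIntegrable
    hf.measurable.aestronglyMeasurable.stronglyMeasurableAtFilter (hx.mono Ioi_subset_Ici_self)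

lemma Monotone.hasDerivWithinAt_integral_Iic_s8 (x : ℝ) :
    HasDerivWithinAt (fun w => ∫ u in a..w, f u) (leftLim f x) (Iic x) x :=
  intervalIntegral.integral_hasDerivWithinAt_of_tendsto_ae_right hf.intervalIntegrable
    hf.measurable.aestronglyMeasurable.stronglyMeasurableAtFilter
    ((hf.tendsto_leftLim x).mono_left (nhdsWithin_Iic_inf_ae_le_nhdsWithin_Iio x))

end PrimitiveOfMonotone

lemma integral_comp_sub_mul_eq_div {f : ℝ → ℝ} (hf : LocallyIntegrable f volume)
    (a c T : ℝ) {ν : ℝ} (hν : ν ≠ 0) :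
    ∫ t in (0 : ℝ)..T, f (c - ν * t) = ((∫ u in a..c, f u) - ∫ u in a..(c - ν * T), f u) / ν := by
  rw [intervalIntegral.integral_comp_mul_left (fun s => f (c - s)) hν, mul_zero,
    intervalIntegral.integral_comp_sub_left f c, sub_zero,
    ← intervalIntegral.integral_interval_sub_left
      (hf.integrableOn_isCompact isCompact_uIcc).intervalIntegrable
      (hf.integrableOn_isCompact isCompact_uIcc).intervalIntegrable, smul_eq_mul, inv_mul_eq_div]

lemma hasDerivWithinAt_integral_comp_sub_mul {f : ℝ → ℝ} (hf : LocallyIntegrable f volume)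
    {a c T ν L : ℝ} {s t : Set ℝ}
    (hF : HasDerivWithinAt (fun w => ∫ u in a..w, f u) L t (c - ν * T))
    (hst : MapsTo (fun ν' => c - ν' * T) s t) (hν : ν ≠ 0) :
    HasDerivWithinAt (fun ν' => ∫ t in (0 : ℝ)..T, f (c - ν' * t))
      (-(1 / ν ^ 2) * ((∫ u in a..c, f u) - (∫ u in a..(c - ν * T), f u) - ν * T * L)) s ν := by
  have hsecant : HasDerivWithinAt
      (fun ν' => ((∫ u in a..c, f u) - ∫ u in a..(c - ν' * T), f u) / ν')
      (-(1 / ν ^ 2) * ((∫ u in a..c, f u) - (∫ u in a..(c - ν * T), f u) - ν * T * L)) s ν := by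
    have hinner : HasDerivWithinAt (fun ν' => c - ν' * T) (-T) s ν := by
      simpa using ((hasDerivAt_id ν).mul_const T).const_sub c |>.hasDerivWithinAt
    refine (((hF.comp ν hinner hst).const_sub (∫ u in a..c, f u)).div
      (hasDerivWithinAt_id ν s) hν).congr_deriv ?_
    simp only [comp_apply, id]
    field_simp
    ring
  have hH : (fun ν' => ∫ t in (0 : ℝ)..T, f (c - ν' * t)) =ᶠ[𝓝 ν]
      fun ν' => ((∫ u in a..c, f u) - ∫ u in a..(c - ν' * T), f u) / ν' :=
    (eventually_ne_nhds hν).mono fun ν' hν' => integral_comp_sub_mul_eq_div hf a c T hν'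
  exact hsecant.congr_of_eventuallyEq (hH.filter_mono nhdsWithin_le_nhds) hH.eq_of_nhds

section VanishingOnNonpos

variable {f : ℝ → ℝ} (hf0 : ∀ x ≤ 0, f x = 0)
include hf0

lemma comp_max_zero_eq_of_forall_nonpos (x : ℝ) : f (max x 0) = f x := by
  rcases le_total x 0 with hx | hx
  · rw [max_eq_right hx, hf0 x hx, hf0 0 le_rfl]
  · rw [max_eq_left hx]

lemma leftLim_eq_zero_of_forall_nonpos {x : ℝ} (hx : x ≤ 0) : leftLim f x = 0 :=
  leftLim_eq_of_tendsto (tendsto_const_nhds.congr' (eventually_nhdsWithin_of_forall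
    fun y hy => (hf0 y (le_of_lt (lt_of_lt_of_le hy hx))).symm))

lemma leftLim_max_zero_eq_of_forall_nonpos (x : ℝ) : leftLim f (max x 0) = leftLim f x := by
  rcases le_total x 0 with hx | hx
  · rw [max_eq_right hx, leftLim_eq_zero_of_forall_nonpos hf0 hx,
      leftLim_eq_zero_of_forall_nonpos hf0 le_rfl]
  · rw [max_eq_left hx]

lemma integral_zero_max_zero_eq_of_forall_nonpos (x : ℝ) :
    ∫ u in (0 : ℝ)..(max x 0), f u = ∫ u in (0 : ℝ)..x, f u := by
  rcases le_total x 0 with hx | hx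
  · rw [max_eq_right hx, intervalIntegral.integral_same,
      intervalIntegral.integral_congr (g := fun _ => 0) fun u hu =>
        hf0 u (hu.2.trans (by simp [hx])), intervalIntegral.integral_zero]
  · rw [max_eq_left hx]

end VanishingOnNonpos

lemma sub_max_zero_mul_eq {c d L : ℝ} (hL : d ≤ 0 → L = 0) :
    (c - max d 0) * L = (c - d) * L := by
  rcases le_total d 0 with hd | hd
  · simp [hL hd]
  · rw [max_eq_left hd]

theorem stmt_8_general (f : ℝ → ℝ) (hf_mono : Monotone f)
    (hf_rc : ∀ x, ContinuousWithinAt f (Ici x) x)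
    (hf0 : ∀ x ≤ 0, f x = 0)
    (c T ν : ℝ) (hT : 0 < T) (hν : 0 < ν) :
    HasDerivWithinAt (fun ν' => ∫ t in (0 : ℝ)..T, f (max (c - ν' * t) 0))
      (-(1 / ν ^ 2) *
        ((∫ u in (0 : ℝ)..c, f u) - (∫ u in (0 : ℝ)..(max (c - ν * T) 0), f u) -
          (c - max (c - ν * T) 0) * Function.leftLim f (max (c - ν * T) 0)))
      (Ici ν) ν ∧
    HasDerivWithinAt (fun ν' => ∫ t in (0 : ℝ)..T, f (max (c - ν' * t) 0))
      (-(1 / ν ^ 2) *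
        ((∫ u in (0 : ℝ)..c, f u) - (∫ u in (0 : ℝ)..(max (c - ν * T) 0), f u) -
          (c - max (c - ν * T) 0) * f (max (c - ν * T) 0)))
      (Iic ν) ν := by
  have hloc : LocallyIntegrable f volume := hf_mono.locallyIntegrable
  have hprimitive := integral_zero_max_zero_eq_of_forall_nonpos hf0 (c - ν * T)
  have hνT : c - (c - ν * T) = ν * T := by ring
  rw [comp_max_zero_eq_of_forall_nonpos hf0, leftLim_max_zero_eq_of_forall_nonpos hf0, hprimitive,
    sub_max_zero_mul_eq fun hd => leftLim_eq_zero_of_forall_nonpos hf0 hd,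
    sub_max_zero_mul_eq (hf0 _), hνT]
  simp only [comp_max_zero_eq_of_forall_nonpos hf0]
  exact ⟨hasDerivWithinAt_integral_comp_sub_mul hloc (hf_mono.hasDerivWithinAt_integral_Iic_s8 0 _)
      (fun ν' hν' => sub_le_sub_left (mul_le_mul_of_nonneg_right hν' hT.le) c) hν.ne',
    hasDerivWithinAt_integral_comp_sub_mul hloc (hf_mono.hasDerivWithinAt_integral_Ici_s8 0 (hf_rc _))
      (fun ν' hν' => sub_le_sub_left (mul_le_mul_of_nonneg_right hν' hT.le) c) hν.ne'⟩

/-- deterministic per-cycle core of Theorem 3 (service-speed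
derivative). For `f` nondecreasing, right-continuous, vanishing on `(-∞,0]`,
`F(w) = ∫₀^w f(u) du`, `c > 0`, `T > 0`, `ν > 0` with `c ≠ νT`,
`a = (c − νT)⁺` and `H(ν') = ∫₀^T f((c − ν't)⁺) dt`, the one-sided derivatives
of `H` at `ν` are
`H'_r(ν) = −(1/ν²)[F(c) − F(a) − (c − a)·f(a−)]` and
`H'_l(ν) = −(1/ν²)[F(c) − F(a) − (c − a)·f(a)]`. -/
theorem stmt_8 (f : ℝ → ℝ) (hf_mono : Monotone f)
    (hf_rc : ∀ x, ContinuousWithinAt f (Ici x) x)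
    (hf0 : ∀ x ≤ 0, f x = 0)
    (c T ν : ℝ) (hc : 0 < c) (hT : 0 < T) (hν : 0 < ν) (hcT : c ≠ ν * T) :
    HasDerivWithinAt (fun ν' => ∫ t in (0 : ℝ)..T, f (max (c - ν' * t) 0))
      (-(1 / ν ^ 2) *
        ((∫ u in (0 : ℝ)..c, f u) - (∫ u in (0 : ℝ)..(max (c - ν * T) 0), f u) -
          (c - max (c - ν * T) 0) * Function.leftLim f (max (c - ν * T) 0)))
      (Ici ν) ν ∧
    HasDerivWithinAt (fun ν' => ∫ t in (0 : ℝ)..T, f (max (c - ν' * t) 0))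
      (-(1 / ν ^ 2) *
        ((∫ u in (0 : ℝ)..c, f u) - (∫ u in (0 : ℝ)..(max (c - ν * T) 0), f u) -
          (c - max (c - ν * T) 0) * f (max (c - ν * T) 0)))
      (Iic ν) ν :=
  stmt_8_general f hf_mono hf_rc hf0 c T ν hT hν
end

section
/- Let (τₖ) be reals, let m ≤ n, and for each k ∈ {m, …, n−1} let σₖ : ℝ → ℝ be continuous in a neighborhood of θ and differentiable at θ. Define W_m(θ') = 0 for all θ' and W_{k+1}(θ') = (Wₖ(θ') + σₖ(θ') − τₖ)⁺. If Wₖ(θ) + σₖ(θ) − τₖ > 0 for all k ∈ {m, …, n−1}, then θ' ↦ Wₙ(θ') is differentiable at θ and W'ₙ(θ) = Σ_{k=m}^{n−1} σ'ₖ(θ). -/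
/-!
Near `θ` every customer of the busy period finds a strictly positive argument of `(·)⁺`, and
these arguments are continuous in `θ`, so on a neighbourhood of `θ` the positive part can be
dropped: `Wₙ` agrees there with the affine sum `∑_{k=m}^{n-1} (σₖ − τₖ)`, whose derivative is
`∑ σ'ₖ(θ)`.
-/

open Filter Topology Finset

theorem max_zero_eventuallyEq_of_pos {X : Type*} [TopologicalSpace X] {g : X → ℝ} {x : X}
    (hg : ContinuousAt g x) (hpos : 0 < g x) : (fun y => max (g y) 0) =ᶠ[𝓝 x] g := by
  filter_upwards [hg.eventually (eventually_gt_nhds hpos)] with y hy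
  exact max_eq_left hy.le

theorem lindley_eventuallyEq_sum_of_busy {X : Type*} [TopologicalSpace X] {x : X} {m n : ℕ}
    (hmn : m ≤ n) (τ : ℕ → ℝ) (σ W : ℕ → X → ℝ)
    (hσ : ∀ k ∈ Ico m n, ContinuousAt (σ k) x) (hWm : ∀ y, W m y = 0)
    (hrec : ∀ k, m ≤ k → k < n → ∀ y, W (k + 1) y = max (W k y + σ k y - τ k) 0)
    (hpos : ∀ k ∈ Ico m n, 0 < W k x + σ k x - τ k) :
    W n =ᶠ[𝓝 x] fun y => ∑ k ∈ Ico m n, (σ k y - τ k) := by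
  induction n, hmn using Nat.le_induction with
  | base => exact Eventually.of_forall fun y => by simp [hWm y]
  | succ n hmn ih =>
    have hsub : Ico m n ⊆ Ico m (n + 1) := Ico_subset_Ico_right n.le_succ
    have hn : n ∈ Ico m (n + 1) := mem_Ico.mpr ⟨hmn, n.lt_succ_self⟩
    have hW : W n =ᶠ[𝓝 x] fun y => ∑ k ∈ Ico m n, (σ k y - τ k) :=
      ih (fun k hk => hσ k (hsub hk)) (fun k hmk hkn => hrec k hmk (hkn.trans n.lt_succ_self))
        (fun k hk => hpos k (hsub hk))
    have hsum_cont : ContinuousAt (fun y => ∑ k ∈ Ico m (n + 1), (σ k y - τ k)) x :=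
      tendsto_finsetSum _ fun k hk => (hσ k hk).sub continuousAt_const
    have hsum_pos : 0 < ∑ k ∈ Ico m (n + 1), (σ k x - τ k) := by
      rw [sum_Ico_succ_top hmn, ← hW.eq_of_nhds]
      linarith [hpos n hn]
    have hstep : W (n + 1) =ᶠ[𝓝 x] fun y => max (∑ k ∈ Ico m (n + 1), (σ k y - τ k)) 0 := by
      filter_upwards [hW] with y hy
      rw [hrec n hmn n.lt_succ_self y, hy, sum_Ico_succ_top hmn, add_sub_assoc]
    exact hstep.trans (max_zero_eventuallyEq_of_pos hsum_cont hsum_pos)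

theorem stmt_13_general (τ : ℕ → ℝ) (m n : ℕ) (hmn : m ≤ n) (θ : ℝ) (σ : ℕ → ℝ → ℝ)
    (hdiff : ∀ k ∈ Finset.Ico m n, DifferentiableAt ℝ (σ k) θ)
    (W : ℕ → ℝ → ℝ)
    (hWm : ∀ θ', W m θ' = 0)
    (hrec : ∀ k, m ≤ k → k < n → ∀ θ',
      W (k + 1) θ' = max (W k θ' + σ k θ' - τ k) 0)
    (hpos : ∀ k ∈ Finset.Ico m n, 0 < W k θ + σ k θ - τ k) :
    HasDerivAt (W n) (∑ k ∈ Finset.Ico m n, deriv (σ k) θ) θ := by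
  have hsum : HasDerivAt (fun θ' => ∑ k ∈ Ico m n, (σ k θ' - τ k))
      (∑ k ∈ Ico m n, deriv (σ k) θ) θ :=
    HasDerivAt.fun_sum fun k hk => (hdiff k hk).hasDerivAt.sub_const (τ k)
  exact hsum.congr_of_eventuallyEq <| lindley_eventuallyEq_sum_of_busy hmn τ σ W
    (fun k hk => (hdiff k hk).continuousAt) hWm hrec hpos

/-- during a busy period the workload derivative is the
accumulated sum of the service-time derivatives: with `W_m ≡ 0`, the Lindley
recursion `W_{k+1}(θ') = (W_k(θ') + σ_k(θ') − τ_k)⁺` for `m ≤ k < n`, each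
`σ_k` continuous near `θ` and differentiable at `θ`, and
`W_k(θ) + σ_k(θ) − τ_k > 0` for all `m ≤ k < n`, the map `θ' ↦ W_n(θ')` is
differentiable at `θ` with derivative `Σ_{k=m}^{n−1} σ'_k(θ)`. -/
theorem stmt_13 (τ : ℕ → ℝ) (m n : ℕ) (hmn : m ≤ n) (θ : ℝ) (σ : ℕ → ℝ → ℝ)
    (hcont : ∀ k ∈ Finset.Ico m n, ∀ᶠ θ' in nhds θ, ContinuousAt (σ k) θ')
    (hdiff : ∀ k ∈ Finset.Ico m n, DifferentiableAt ℝ (σ k) θ)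
    (W : ℕ → ℝ → ℝ)
    (hWm : ∀ θ', W m θ' = 0)
    (hrec : ∀ k, m ≤ k → k < n → ∀ θ',
      W (k + 1) θ' = max (W k θ' + σ k θ' - τ k) 0)
    (hpos : ∀ k ∈ Finset.Ico m n, 0 < W k θ + σ k θ - τ k) :
    HasDerivAt (W n) (∑ k ∈ Finset.Ico m n, deriv (σ k) θ) θ :=
  stmt_13_general τ m n hmn θ σ hdiff W hWm hrec hpos
end

section
/- Let f : ℝ → ℝ be nondecreasing with f(x) = 0 for all x ≤ 0, and let T > 0. For b ≥ 0 set H(b) = ∫₀^T f((b − t)⁺) dt. Then for all b₁, b₂ ≥ 0: |H(b₁) − H(b₂)| ≤ f(max(b₁, b₂)) · |b₁ − b₂|. -/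
lemma stmt_15_key (f : ℝ → ℝ) (hf_mono : Monotone f) (hf0 : ∀ x ≤ 0, f x = 0)
    (T : ℝ) (hT : 0 ≤ T) (b₁ b₂ : ℝ) (h2 : 0 ≤ b₂) (h12 : b₂ ≤ b₁) :
    |(∫ t in (0 : ℝ)..T, f (max (b₁ - t) 0)) -
      (∫ t in (0 : ℝ)..T, f (max (b₂ - t) 0))| ≤ f b₁ * (b₁ - b₂) := by
  set g : ℝ → ℝ := fun s => f (max s 0) with hg
  have hg_mono : Monotone g := hf_mono.comp (fun a b h => max_le_max h le_rfl)
  have hg_nonneg : ∀ s, 0 ≤ g s := by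
    intro s
    have : f 0 = 0 := hf0 0 le_rfl
    calc (0:ℝ) = f 0 := this.symm
    _ ≤ g s := hf_mono (le_max_right s 0)
  have hgint : ∀ a b : ℝ, IntervalIntegrable g MeasureTheory.volume a b :=
    fun a b => (hg_mono.monotoneOn _).intervalIntegrable
  have hcomp : ∀ b : ℝ, (∫ t in (0:ℝ)..T, g (b - t)) = ∫ s in (b - T)..b, g s := by
    intro b
    rw [intervalIntegral.integral_comp_sub_left g b]
    norm_num
  have h1 : (0:ℝ) ≤ b₁ := h2.trans h12
  have hb1 : g b₁ = f b₁ := by simp [hg, max_eq_left h1]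
  have add1 : (∫ s in (b₂ - T)..(b₁ - T), g s) + (∫ s in (b₁ - T)..b₁, g s)
      = ∫ s in (b₂ - T)..b₁, g s :=
    intervalIntegral.integral_add_adjacent_intervals (hgint _ _) (hgint _ _)
  have add2 : (∫ s in (b₂ - T)..b₂, g s) + (∫ s in b₂..b₁, g s)
      = ∫ s in (b₂ - T)..b₁, g s :=
    intervalIntegral.integral_add_adjacent_intervals (hgint _ _) (hgint _ _)
  have hA0 : 0 ≤ ∫ s in b₂..b₁, g s :=
    intervalIntegral.integral_nonneg h12 (fun u _ => hg_nonneg u)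
  have hB0 : 0 ≤ ∫ s in (b₂ - T)..(b₁ - T), g s :=
    intervalIntegral.integral_nonneg (by linarith) (fun u _ => hg_nonneg u)
  have hA1 : (∫ s in b₂..b₁, g s) ≤ f b₁ * (b₁ - b₂) := by
    have := intervalIntegral.integral_mono_on h12 (hgint _ _)
      (intervalIntegrable_const (c := f b₁))
      (fun x hx => hb1 ▸ hg_mono hx.2)
    simpa [mul_comm] using this
  have hB1 : (∫ s in (b₂ - T)..(b₁ - T), g s) ≤ f b₁ * (b₁ - b₂) := by
    have := intervalIntegral.integral_mono_on (a := b₂ - T) (b := b₁ - T)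
      (by linarith) (hgint _ _) (intervalIntegrable_const (c := f b₁))
      (fun x hx => hb1 ▸ hg_mono (by linarith [hx.2]))
    have h' : (∫ s in (b₂ - T)..(b₁ - T), g s) ≤ (b₁ - T - (b₂ - T)) * f b₁ := by
      simpa [smul_eq_mul] using this
    calc (∫ s in (b₂ - T)..(b₁ - T), g s) ≤ (b₁ - T - (b₂ - T)) * f b₁ := h'
    _ = f b₁ * (b₁ - b₂) := by ring
  have key : (∫ t in (0:ℝ)..T, g (b₁ - t)) - (∫ t in (0:ℝ)..T, g (b₂ - t))
      = (∫ s in b₂..b₁, g s) - (∫ s in (b₂ - T)..(b₁ - T), g s) := by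
    rw [hcomp b₁, hcomp b₂]; linarith
  have : |(∫ t in (0:ℝ)..T, g (b₁ - t)) - (∫ t in (0:ℝ)..T, g (b₂ - t))|
      ≤ f b₁ * (b₁ - b₂) := by
    rw [key, abs_le]; constructor <;> linarith
  simpa [hg] using this

/-- per-cycle domination bound: for `f` nondecreasing and
vanishing on `(-∞,0]`, `T > 0` and `H(b) = ∫₀^T f((b − t)⁺) dt`, one has
`|H(b₁) − H(b₂)| ≤ f(max(b₁,b₂))·|b₁ − b₂|` for all `b₁, b₂ ≥ 0`. -/
theorem stmt_15 (f : ℝ → ℝ) (hf_mono : Monotone f) (hf0 : ∀ x ≤ 0, f x = 0)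
    (T : ℝ) (hT : 0 < T) :
    ∀ b₁ b₂ : ℝ, 0 ≤ b₁ → 0 ≤ b₂ →
      |(∫ t in (0 : ℝ)..T, f (max (b₁ - t) 0)) -
        (∫ t in (0 : ℝ)..T, f (max (b₂ - t) 0))| ≤
      f (max b₁ b₂) * |b₁ - b₂| := by
  intro b₁ b₂ h1 h2
  rcases le_total b₂ b₁ with h | h
  · rw [max_eq_left h, abs_of_nonneg (by linarith : (0:ℝ) ≤ b₁ - b₂)]
    exact stmt_15_key f hf_mono hf0 T hT.le b₁ b₂ h2 h
  · rw [max_eq_right h, abs_of_nonpos (by linarith : b₁ - b₂ ≤ 0), abs_sub_comm]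
    have := stmt_15_key f hf_mono hf0 T hT.le b₂ b₁ h1 h
    calc |(∫ t in (0:ℝ)..T, f (max (b₂ - t) 0)) - ∫ t in (0:ℝ)..T, f (max (b₁ - t) 0)|
        ≤ f b₂ * (b₂ - b₁) := this
    _ = f b₂ * -(b₁ - b₂) := by ring
end
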